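/- Approximation guarantee for volume-densest subhypergraph: the greedy peeling algorithm that repeatedly removes a node with minimum current neighborhood size returns a node set whose volume-density is at least ρ*/(d_pair(d_card−2)+2), where ρ* is the maximum volume-density over all subsets. -/

import Mathlib

open Finset

variable {α : Type*} [DecidableEq α]

-- Neighbors of `v` within the strongly induced subhypergraph `H[S]`.
open Classical in
noncomputable def nbr (E : Finset (Finset α)) (S : Finset α) (v : α) : Finset α :=
  S.filter (fun u => u ≠ v ∧ ∃ e ∈ E, e ⊆ S ∧ v ∈ e ∧ u ∈ e)

/-- `S` is `k`-cohesive: every node of `S` has at least `k` neighbors in `H[S]`. -/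
def cohesive (E : Finset (Finset α)) (k : ℕ) (S : Finset α) : Prop :=
  ∀ v ∈ S, k ≤ (nbr E S v).card

/-- Volume-density of a node set `S`. -/
noncomputable def density (E : Finset (Finset α)) (S : Finset α) : ℚ :=
  (∑ u ∈ S, ((nbr E S u).card : ℚ)) / S.card

/-!
Deleting a node `v` from `S` lowers the degree sum of `H[S]` by `|N(v)|` at `v` and by at most
`d_pair (d_card - 2) + 1` at each neighbour `u` of `v`, which can only lose `v` and the other
nodes of the at most `d_pair` edges through `u` and `v`. Since deleting a node of a densest set
`S*` cannot raise its density, every node of `S*` has at least `ρ* / (d_pair (d_card - 2) + 2)`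
neighbours. Peeling eventually deletes a node of `S*`; at the first such step that node has
minimum degree in the current set, which contains `S*`, so every degree there, and hence the
density, is at least `ρ* / (d_pair (d_card - 2) + 2)`.
-/

section Neighbors

variable {E : Finset (Finset α)} {S : Finset α} {u v : α}

lemma mem_nbr : u ∈ nbr E S v ↔ u ∈ S ∧ u ≠ v ∧ ∃ e ∈ E, e ⊆ S ∧ v ∈ e ∧ u ∈ e := by
  simp [nbr]

lemma nbr_subset_erase : nbr E S v ⊆ S.erase v := fun _ hu =>
  let ⟨huS, huv, _⟩ := mem_nbr.1 hu
  mem_erase.2 ⟨huv, huS⟩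

lemma nbr_mono {T : Finset α} (h : S ⊆ T) (v : α) : nbr E S v ⊆ nbr E T v := fun _ hu =>
  let ⟨huS, huv, e, he, heS, hve, hue⟩ := mem_nbr.1 hu
  mem_nbr.2 ⟨h huS, huv, e, he, heS.trans h, hve, hue⟩

lemma mem_nbr_erase_of_not_mem {w : α} {e : Finset α} (he : e ∈ E) (heS : e ⊆ S) (hue : u ∈ e)
    (hwe : w ∈ e) (hwu : w ≠ u) (hve : v ∉ e) : w ∈ nbr E (S.erase v) u :=
  mem_nbr.2 ⟨mem_erase.2 ⟨ne_of_mem_of_not_mem hwe hve, heS hwe⟩, hwu, e, he,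
    fun _ hx => mem_erase.2 ⟨ne_of_mem_of_not_mem hx hve, heS hx⟩, hue, hwe⟩

lemma nbr_subset_nbr_erase_of_not_mem_nbr (huv : u ≠ v) (hu : u ∉ nbr E S v) :
    nbr E S u ⊆ nbr E (S.erase v) u := fun w hw => by
  obtain ⟨-, hwu, e, he, heS, hue, hwe⟩ := mem_nbr.1 hw
  refine mem_nbr_erase_of_not_mem he heS hue hwe hwu fun hve => hu ?_
  exact mem_nbr.2 ⟨heS hue, huv, e, he, heS, hve, hue⟩

lemma nbr_subset_insert_nbr_erase_union (u v : α) :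
    nbr E S u ⊆ insert v (nbr E (S.erase v) u ∪
      (E.filter fun e => u ∈ e ∧ v ∈ e).biUnion fun e => e \ {u, v}) := fun w hw => by
  obtain ⟨-, hwu, e, he, heS, hue, hwe⟩ := mem_nbr.1 hw
  by_cases hwv : w = v
  · exact hwv ▸ mem_insert_self _ _
  refine mem_insert_of_mem ?_
  by_cases hve : v ∈ e
  · refine mem_union_right _ (mem_biUnion.2 ⟨e, mem_filter.2 ⟨he, hue, hve⟩, ?_⟩)
    simp [hwe, hwu, hwv]
  · exact mem_union_left _ (mem_nbr_erase_of_not_mem he heS hue hwe hwu hve)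

end Neighbors

section DegreeSum

variable {E : Finset (Finset α)} {dcard dpair : ℕ}

lemma card_nbr_le_card_nbr_erase_add (hcard : ∀ e ∈ E, e.card ≤ dcard)
    (hpair : ∀ u w : α, u ≠ w → (E.filter (fun e => u ∈ e ∧ w ∈ e)).card ≤ dpair)
    {S : Finset α} {u v : α} (huv : u ≠ v) :
    (nbr E S u).card ≤ (nbr E (S.erase v) u).card + (dpair * (dcard - 2) + 1) := by
  set lost := (E.filter fun e => u ∈ e ∧ v ∈ e).biUnion fun e => e \ {u, v}
  have hlost : lost.card ≤ dpair * (dcard - 2) := by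
    refine (card_biUnion_le_card_mul _ _ (dcard - 2) fun e he => ?_).trans
      (Nat.mul_le_mul_right _ (hpair u v huv))
    obtain ⟨heE, hue, hve⟩ := mem_filter.1 he
    rw [card_sdiff_of_subset (insert_subset hue (singleton_subset_iff.2 hve)),
      card_pair huv]
    exact Nat.sub_le_sub_right (hcard e heE) 2
  have hunion := card_union_le (nbr E (S.erase v) u) lost
  have hinsert : (nbr E S u).card ≤ (insert v (nbr E (S.erase v) u ∪ lost)).card :=
    card_le_card (nbr_subset_insert_nbr_erase_union u v)
  have := card_insert_le v (nbr E (S.erase v) u ∪ lost)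
  omega

lemma sum_card_nbr_le_add_sum_card_nbr_erase (hcard : ∀ e ∈ E, e.card ≤ dcard)
    (hpair : ∀ u w : α, u ≠ w → (E.filter (fun e => u ∈ e ∧ w ∈ e)).card ≤ dpair)
    {S : Finset α} {v : α} (hv : v ∈ S) :
    ∑ u ∈ S, (nbr E S u).card ≤
      (dpair * (dcard - 2) + 2) * (nbr E S v).card +
        ∑ u ∈ S.erase v, (nbr E (S.erase v) u).card := by
  have hper : ∀ u ∈ S.erase v, (nbr E S u).card ≤ (nbr E (S.erase v) u).card +
      if u ∈ nbr E S v then dpair * (dcard - 2) + 1 else 0 := fun u hu => by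
    have huv := ne_of_mem_erase hu
    split_ifs with h
    · exact card_nbr_le_card_nbr_erase_add hcard hpair huv
    · exact card_le_card (nbr_subset_nbr_erase_of_not_mem_nbr huv h)
  have hcount : ∑ u ∈ S.erase v, (if u ∈ nbr E S v then dpair * (dcard - 2) + 1 else 0) =
      (nbr E S v).card * (dpair * (dcard - 2) + 1) := by
    rw [sum_ite_mem, inter_eq_right.2 nbr_subset_erase, sum_const, smul_eq_mul]
  rw [← add_sum_erase _ _ hv]
  have := (sum_le_sum hper).trans_eq (by rw [sum_add_distrib, hcount])
  linarith

end DegreeSum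

section Density

variable {E : Finset (Finset α)}

lemma density_nonneg (S : Finset α) : 0 ≤ density E S := by
  unfold density
  positivity

lemma sum_card_nbr_eq_density_mul_card (S : Finset α) :
    ∑ u ∈ S, ((nbr E S u).card : ℚ) = density E S * S.card := by
  rcases S.eq_empty_or_nonempty with rfl | hS
  · simp
  · rw [density, div_mul_cancel₀ _ (by exact_mod_cast hS.card_pos.ne')]

lemma cohesive.le_density {k : ℕ} {S : Finset α} (h : cohesive E k S) (hS : S.Nonempty) :
    (k : ℚ) ≤ density E S := by
  rw [density, le_div_iff₀ (by exact_mod_cast hS.card_pos), mul_comm, ← nsmul_eq_mul]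
  exact card_nsmul_le_sum _ _ _ fun v hv => by exact_mod_cast h v hv

lemma density_le_mul_card_nbr_of_density_erase_le {dcard dpair : ℕ}
    (hcard : ∀ e ∈ E, e.card ≤ dcard)
    (hpair : ∀ u w : α, u ≠ w → (E.filter (fun e => u ∈ e ∧ w ∈ e)).card ≤ dpair)
    {S : Finset α} {v : α} (hv : v ∈ S) (hmax : density E (S.erase v) ≤ density E S) :
    density E S ≤ ((dpair * (dcard - 2) + 2 : ℕ) : ℚ) * (nbr E S v).card := by
  have hsum : ∑ u ∈ S, ((nbr E S u).card : ℚ) ≤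
      ((dpair * (dcard - 2) + 2 : ℕ) : ℚ) * (nbr E S v).card +
        ∑ u ∈ S.erase v, ((nbr E (S.erase v) u).card : ℚ) := by
    exact_mod_cast sum_card_nbr_le_add_sum_card_nbr_erase hcard hpair hv
  have hSv : ((S.erase v).card : ℚ) = S.card - 1 := by
    rw [card_erase_of_mem hv, Nat.cast_sub (card_pos.2 ⟨v, hv⟩), Nat.cast_one]
  rw [sum_card_nbr_eq_density_mul_card, sum_card_nbr_eq_density_mul_card, hSv] at hsum
  have hS : (1 : ℚ) ≤ S.card := by exact_mod_cast card_pos.2 ⟨v, hv⟩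
  nlinarith [mul_le_mul_of_nonneg_right hmax (sub_nonneg.2 hS)]

end Density

lemma exists_mem_min_card_nbr_of_subset {E : Finset (Finset α)} {seq : ℕ → Finset α}
    (hstep : ∀ i : ℕ, (seq i).Nonempty →
      ∃ v ∈ seq i, (∀ u ∈ seq i, (nbr E (seq i) v).card ≤ (nbr E (seq i) u).card) ∧
        seq (i + 1) = (seq i).erase v)
    {T : Finset α} (hT : T.Nonempty) (h0 : T ⊆ seq 0) :
    ∃ i, ∃ v ∈ T, T ⊆ seq i ∧ ∀ u ∈ seq i, (nbr E (seq i) v).card ≤ (nbr E (seq i) u).card := by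
  have hleave : ∃ i, ¬ T ⊆ seq i := by
    by_contra! hall
    refine not_strictAnti_of_wellFoundedLT seq (strictAnti_nat_of_succ_lt fun i => ?_)
    obtain ⟨v, hv, -, hnext⟩ := hstep i (hT.mono (hall i))
    exact hnext ▸ erase_ssubset hv
  obtain ⟨i, hi, hi'⟩ : ∃ i, T ⊆ seq i ∧ ¬ T ⊆ seq (i + 1) := by
    by_contra! hstay
    obtain ⟨j, hj⟩ := hleave
    exact hj (Nat.rec h0 hstay j)
  obtain ⟨v, -, hmin, hnext⟩ := hstep i (hT.mono hi)
  refine ⟨i, v, ?_, hi, hmin⟩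
  by_contra hvT
  exact hi' (hnext ▸ subset_erase.2 ⟨hi, hvT⟩)

variable [Fintype α]

/-- Approximation guarantee of greedy peeling for the volume-densest
subhypergraph: some intermediate set has density at least
`ρ* / (d_pair·(d_card − 2) + 2)`. -/
theorem greedy_approx (E : Finset (Finset α)) (dcard dpair : ℕ)
    (hcard : ∀ e ∈ E, e.card ≤ dcard)
    (hpair : ∀ u w : α, u ≠ w → (E.filter (fun e => u ∈ e ∧ w ∈ e)).card ≤ dpair)
    (seq : ℕ → Finset α) (h0 : seq 0 = Finset.univ)
    (hstep : ∀ i : ℕ, (seq i).Nonempty →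
      ∃ v ∈ seq i, (∀ u ∈ seq i, (nbr E (seq i) v).card ≤ (nbr E (seq i) u).card) ∧
        seq (i + 1) = (seq i).erase v)
    (Sstar : Finset α) :
    ∃ i : ℕ, density E Sstar ≤ ((dpair * (dcard - 2) + 2 : ℕ) : ℚ) * density E (seq i) := by
  obtain ⟨Smax, -, hmax⟩ := exists_max_image univ (density E) ⟨∅, mem_univ _⟩
  have hSstar : density E Sstar ≤ density E Smax := hmax Sstar (mem_univ _)
  rcases Smax.eq_empty_or_nonempty with rfl | hne
  · refine ⟨0, hSstar.trans ?_⟩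
    rw [show density E ∅ = 0 by simp [density]]
    exact mul_nonneg (Nat.cast_nonneg _) (density_nonneg _)
  obtain ⟨i, v, hv, hsub, hmin⟩ :=
    exists_mem_min_card_nbr_of_subset hstep hne (h0 ▸ subset_univ _)
  refine ⟨i, hSstar.trans <| (density_le_mul_card_nbr_of_density_erase_le hcard hpair hv
    (hmax _ (mem_univ _))).trans <| mul_le_mul_of_nonneg_left ?_ (Nat.cast_nonneg _)⟩
  calc ((nbr E Smax v).card : ℚ) ≤ (nbr E (seq i) v).card := by
        exact_mod_cast card_le_card (nbr_mono hsub v)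
    _ ≤ density E (seq i) := cohesive.le_density hmin (hne.mono hsub)
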